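/- arXiv:2312.15496 — 9 statements merged into one kernel-verified Lean document; each statement's English description precedes it below -/
import Mathlib

section
/- If real numbers x_1, ..., x_n satisfy Σ_{k=1}^{n-1} |x_{k+1} - x_k| = x_max - x_min, and the index of the minimum precedes the index of the maximum, then the sequence is sorted in ascending order: x_1 ≤ x_2 ≤ ... ≤ x_n. -/
/-- If the sum of absolute consecutive differences equals max − min, and an index
attaining the minimum precedes an index attaining the maximum, then the sequence
is sorted in ascending order. -/
theorem sorted_of_sum_abs_consecutive_diff_eq
    (n : ℕ) (x : ℕ → ℝ) (i j : ℕ) (hij : i < j) (hjn : j < n)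
    (hmin : ∀ k < n, x i ≤ x k) (hmax : ∀ k < n, x k ≤ x j)
    (hsum : ∑ k ∈ Finset.range (n - 1), |x (k + 1) - x k| = x j - x i) :
    ∀ k l, k ≤ l → l < n → x k ≤ x l := by
  have hsub : Finset.Ico i j ⊆ Finset.range (n - 1) := by
    intro k hk
    simp only [Finset.mem_Ico, Finset.mem_range] at hk ⊢
    omega
  have htel : ∑ k ∈ Finset.Ico i j, (x (k + 1) - x k) = x j - x i := by
    rw [Finset.sum_Ico_eq_sub _ (le_of_lt hij), Finset.sum_range_sub, Finset.sum_range_sub]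
    ring
  have h1 : ∑ k ∈ Finset.Ico i j, (x (k + 1) - x k)
      ≤ ∑ k ∈ Finset.Ico i j, |x (k + 1) - x k| :=
    Finset.sum_le_sum (fun k _ => le_abs_self _)
  have h2 : ∑ k ∈ Finset.Ico i j, |x (k + 1) - x k|
      ≤ ∑ k ∈ Finset.range (n - 1), |x (k + 1) - x k| :=
    Finset.sum_le_sum_of_subset_of_nonneg hsub (fun k _ _ => abs_nonneg _)
  have he1 : ∑ k ∈ Finset.Ico i j, |x (k + 1) - x k| = x j - x i := by
    rw [hsum] at h2
    rw [htel] at h1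
    linarith
  have hsd := Finset.sum_sdiff (f := fun k => |x (k + 1) - x k|) hsub
  rw [he1, hsum] at hsd
  have he2 : ∑ k ∈ Finset.range (n - 1) \ Finset.Ico i j, |x (k + 1) - x k| = 0 := by
    linarith
  have hzero : ∀ k ∈ Finset.range (n - 1) \ Finset.Ico i j, |x (k + 1) - x k| = 0 :=
    (Finset.sum_eq_zero_iff_of_nonneg (fun k _ => abs_nonneg _)).mp he2
  have hpos : ∀ k ∈ Finset.Ico i j, x (k + 1) - x k = |x (k + 1) - x k| := by
    have := (Finset.sum_eq_sum_iff_of_le (fun k _ => le_abs_self (x (k + 1) - x k))).mp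
      (by rw [htel, he1])
    exact this
  have hstep : ∀ k, k < n - 1 → x k ≤ x (k + 1) := by
    intro k hk
    by_cases hmem : k ∈ Finset.Ico i j
    · have := hpos k hmem
      have := abs_nonneg (x (k + 1) - x k)
      linarith
    · have hk' : k ∈ Finset.range (n - 1) \ Finset.Ico i j := by
        simp only [Finset.mem_sdiff, Finset.mem_range]
        exact ⟨hk, hmem⟩
      have := hzero k hk'
      have : x (k + 1) - x k = 0 := abs_eq_zero.mp this
      linarith
  intro k l hkl hln
  induction l with
  | zero => simp [Nat.le_zero.mp hkl]
  | succ m ih =>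
    rcases Nat.lt_or_ge k (m + 1) with h | h
    · have : x k ≤ x m := ih (by omega) (by omega)
      have : x m ≤ x (m + 1) := hstep m (by omega)
      linarith [ih (show k ≤ m by omega) (by omega)]
    · have : k = m + 1 := by omega
      simp [this]
end

section
/- If real numbers x_1, ..., x_n achieve the minimum Σ_{k=1}^{n-1} |x_{k+1} - x_k| = x_max - x_min with an index i herein attaining the minimum and index j > i attaining the maximum, then x_1 = x_2 = ... = x_i and x_j = x_{j+1} = ... = x_n. -/
/-- If the sum of absolute consecutive differences attains its minimum x_j − x_i,
with index `i` attaining the minimum value and index `j > i` attaining the maximum,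
then the sequence is constant up to `i` and constant from `j` on. -/
theorem flat_ends_of_sum_abs_consecutive_diff_eq
    (n : ℕ) (x : ℕ → ℝ) (i j : ℕ) (hij : i < j) (hjn : j < n)
    (hmin : ∀ k < n, x i ≤ x k) (hmax : ∀ k < n, x k ≤ x j)
    (hsum : ∑ k ∈ Finset.range (n - 1), |x (k + 1) - x k| = x j - x i) :
    (∀ k ≤ i, x k = x i) ∧ (∀ k, j ≤ k → k < n → x k = x j) := by
  set d : ℕ → ℝ := fun k => |x (k + 1) - x k| with hd
  have hsub : Finset.Ico i j ⊆ Finset.range (n - 1) := by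
    intro k hk
    simp only [Finset.mem_Ico, Finset.mem_range] at *
    omega
  have htel : ∑ k ∈ Finset.Ico i j, (x (k + 1) - x k) = x j - x i := by
    have : ∀ m, i ≤ m → ∑ k ∈ Finset.Ico i m, (x (k + 1) - x k) = x m - x i := by
      intro m hm
      induction m, hm using Nat.le_induction with
      | base => simp
      | succ m hm ih => rw [Finset.sum_Ico_succ_top hm, ih]; ring
    exact this j hij.le
  have hlow : x j - x i ≤ ∑ k ∈ Finset.Ico i j, d k := by
    calc x j - x i = ∑ k ∈ Finset.Ico i j, (x (k + 1) - x k) := htel.symm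
    _ ≤ ∑ k ∈ Finset.Ico i j, d k := Finset.sum_le_sum fun k _ => le_abs_self _
  have hsplit : ∑ k ∈ Finset.range (n - 1) \ Finset.Ico i j, d k
      + ∑ k ∈ Finset.Ico i j, d k = ∑ k ∈ Finset.range (n - 1), d k :=
    Finset.sum_sdiff hsub
  have hnonneg : ∀ k ∈ Finset.range (n - 1) \ Finset.Ico i j, 0 ≤ d k :=
    fun k _ => abs_nonneg _
  have hrest : ∑ k ∈ Finset.range (n - 1) \ Finset.Ico i j, d k = 0 := by
    have h1 : 0 ≤ ∑ k ∈ Finset.range (n - 1) \ Finset.Ico i j, d k :=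
      Finset.sum_nonneg hnonneg
    have h2 : ∑ k ∈ Finset.range (n - 1), d k = x j - x i := hsum
    linarith
  have hzero : ∀ k ∈ Finset.range (n - 1) \ Finset.Ico i j, d k = 0 :=
    (Finset.sum_eq_zero_iff_of_nonneg hnonneg).mp hrest
  have hz : ∀ k, k < n - 1 → (k < i ∨ j ≤ k) → x (k + 1) = x k := by
    intro k hk1 hk2
    have hmem : k ∈ Finset.range (n - 1) \ Finset.Ico i j := by
      simp only [Finset.mem_sdiff, Finset.mem_range, Finset.mem_Ico]
      omega
    have := hzero k hmem
    have : x (k + 1) - x k = 0 := abs_eq_zero.mp this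
    linarith
  constructor
  · have h1 : ∀ m, ∀ k, k + m = i → x k = x i := by
      intro m
      induction m with
      | zero => intro k hk; simp at hk; rw [hk]
      | succ m ih =>
        intro k hk
        have hstep : x (k + 1) = x k := hz k (by omega) (Or.inl (by omega))
        have := ih (k + 1) (by omega)
        rw [← this, hstep]
    intro k hk
    exact h1 (i - k) k (by omega)
  · intro k hk
    induction k, hk using Nat.le_induction with
    | base => intro _; rfl
    | succ k hk ih =>
      intro hkn
      rw [hz k (by omega) (Or.inr hk)]
      exact ih (by omega)
end

section
/- With no ties among the y-values (distinct y_i), Chatterjee's coefficient ξ_n(x,y) = 1 - 3·Σ_{i=1}^{n-1}|r_{i+1}-r_i| / (n²-1) is at most (n-2)/(n+1), with equality if and only if the ranks r_i are sorted in ascending or descending order. -/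
/-!
Distinct ranks make every step `|r (i+1) - r i|` at least `1`, so the sum of the `n - 1` steps
is at least `n - 1`, which is exactly the bound on `ξₙ`. Equality forces every step to be `±1`.
Two consecutive steps of opposite sign would return to a value already taken, so all steps have
the same sign and `r` is monotone or antitone. Conversely, for monotone ranks the sum telescopes
to `r (n-1) - r 0 ≤ n - 1`.
-/

open Finset Function

def totalVariation {m : ℕ} (f : Fin (m + 1) → ℤ) : ℤ :=
  ∑ i : Fin m, |f i.succ - f i.castSucc|

section TotalVariation

variable {m : ℕ} {f : Fin (m + 1) → ℤ}

lemma totalVariation_neg (f : Fin (m + 1) → ℤ) : totalVariation (-f) = totalVariation f := by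
  simp only [totalVariation, Pi.neg_apply, neg_sub_neg]
  exact sum_congr rfl fun i _ => abs_sub_comm _ _

lemma totalVariation_of_monotone (hf : Monotone f) :
    totalVariation f = f (Fin.last m) - f 0 := by
  rcases m with _ | k
  · simp [totalVariation]
  · rw [totalVariation, ← Fin.succ_last, ← Fin.sum_Iic_sub (Fin.last k), ← Finset.Iic_top]
    exact sum_congr rfl fun i _ => abs_of_nonneg (sub_nonneg.2 (hf (Fin.castSucc_le_succ i)))

lemma totalVariation_of_antitone (hf : Antitone f) :
    totalVariation f = f 0 - f (Fin.last m) := by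
  have hf' : Monotone (-f) := hf.neg
  rw [← totalVariation_neg, totalVariation_of_monotone hf', Pi.neg_apply, Pi.neg_apply,
    neg_sub_neg]

lemma totalVariation_le_of_monotone_or_antitone {a : ℤ} (hf : Monotone f ∨ Antitone f)
    (hb : ∀ i, f i ∈ Set.Icc a (a + m)) : totalVariation f ≤ m := by
  have h₀ := hb 0
  have hlast := hb (Fin.last m)
  rcases hf with hf | hf
  · rw [totalVariation_of_monotone hf]; grind
  · rw [totalVariation_of_antitone hf]; grind

lemma one_le_abs_succ_sub_castSucc (hf : Injective f) (i : Fin m) :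
    1 ≤ |f i.succ - f i.castSucc| :=
  Int.one_le_abs (sub_ne_zero.2 (hf.ne Fin.castSucc_lt_succ.ne'))

lemma le_totalVariation_of_injective (hf : Injective f) : (m : ℤ) ≤ totalVariation f := by
  simpa [totalVariation] using sum_le_sum fun i (_ : i ∈ univ) => one_le_abs_succ_sub_castSucc hf i

lemma totalVariation_eq_iff_abs_succ_sub_eq_one (hf : Injective f) :
    totalVariation f = m ↔ ∀ i : Fin m, |f i.succ - f i.castSucc| = 1 := by
  have := sum_eq_sum_iff_of_le fun i (_ : i ∈ univ) => one_le_abs_succ_sub_castSucc hf i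
  simp only [sum_const, card_univ, Fintype.card_fin, nsmul_eq_mul, mul_one, mem_univ,
    forall_const] at this
  rw [totalVariation, eq_comm, this]
  exact forall_congr' fun i => eq_comm

lemma succ_sub_castSucc_eq_of_abs_eq_one (hf : Injective f)
    (hstep : ∀ i : Fin m, |f i.succ - f i.castSucc| = 1) (i j : Fin m) :
    f i.succ - f i.castSucc = f j.succ - f j.castSucc := by
  set d : Fin m → ℤ := fun i => f i.succ - f i.castSucc with hd
  have hadj : ∀ k (hk : k + 1 < m), d ⟨k + 1, hk⟩ = d ⟨k, by omega⟩ := by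
    intro k hk
    have hne : f ⟨k + 2, by omega⟩ ≠ f ⟨k, by omega⟩ := hf.ne (by simp)
    have h₁ := hstep ⟨k + 1, hk⟩
    have h₂ := hstep ⟨k, by omega⟩
    simp only [hd, Fin.succ_mk, Fin.castSucc_mk] at h₁ h₂ ⊢
    rcases abs_eq_abs.1 (h₁.trans h₂.symm) with h | h <;> grind
  have hconst : ∀ k (hk : k < m), d ⟨k, hk⟩ = d ⟨0, by omega⟩ := by
    intro k
    induction k with
    | zero => intro; rfl
    | succ k ih => intro hk; rw [hadj k hk, ih]
  exact (hconst i i.isLt).trans (hconst j j.isLt).symm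

lemma monotone_or_antitone_of_abs_succ_sub_eq_one (hf : Injective f)
    (hstep : ∀ i : Fin m, |f i.succ - f i.castSucc| = 1) : Monotone f ∨ Antitone f := by
  rcases m with _ | k
  · exact Or.inl (Fin.monotone_iff_le_succ.2 fun i => i.elim0)
  rcases abs_eq_abs.1 ((hstep 0).trans abs_one.symm) with h | h
  · left
    exact Fin.monotone_iff_le_succ.2 fun i => by
      have := succ_sub_castSucc_eq_of_abs_eq_one hf hstep i 0; omega
  · right
    exact Fin.antitone_iff_succ_le.2 fun i => by
      have := succ_sub_castSucc_eq_of_abs_eq_one hf hstep i 0; omega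

lemma totalVariation_eq_iff_monotone_or_antitone {a : ℤ} (hf : Injective f)
    (hb : ∀ i, f i ∈ Set.Icc a (a + m)) :
    totalVariation f = m ↔ Monotone f ∨ Antitone f := by
  refine ⟨fun h => monotone_or_antitone_of_abs_succ_sub_eq_one hf
    ((totalVariation_eq_iff_abs_succ_sub_eq_one hf).1 h), fun hmono => ?_⟩
  exact le_antisymm (totalVariation_le_of_monotone_or_antitone hmono hb)
    (le_totalVariation_of_injective hf)

end TotalVariation

section Ranks

variable {α : Type*} {n : ℕ} {r : α → Fin n}

lemma Fin.monotone_natCast_val_iff [Preorder α] :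
    Monotone (fun i => ((r i : ℕ) : ℤ)) ↔ Monotone r := by
  simp only [Monotone, Nat.cast_le, Fin.val_fin_le]

lemma Fin.antitone_natCast_val_iff [Preorder α] :
    Antitone (fun i => ((r i : ℕ) : ℤ)) ↔ Antitone r := by
  simp only [Antitone, Nat.cast_le, Fin.val_fin_le]

lemma Fin.natCast_val_comp_injective (hr : Injective r) :
    Injective (fun i => ((r i : ℕ) : ℤ)) :=
  fun _ _ h => hr (Fin.ext (Nat.cast_injective h))

end Ranks

lemma totalVariation_natCast_val_eq_iff {m : ℕ} {r : Fin (m + 1) → Fin (m + 1)}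
    (hr : Injective r) :
    totalVariation (fun i => ((r i : ℕ) : ℤ)) = m ↔ Monotone r ∨ Antitone r := by
  rw [totalVariation_eq_iff_monotone_or_antitone (a := 0) (Fin.natCast_val_comp_injective hr)
    fun i => ⟨by positivity, by simp; omega⟩, Fin.monotone_natCast_val_iff,
    Fin.antitone_natCast_val_iff]

lemma sum_abs_castLE_eq_totalVariation {m : ℕ} (r : Fin (m + 1) → Fin (m + 1))
    (h : m + 1 - 1 + 1 ≤ m + 1) :
    ∑ i : Fin (m + 1 - 1), |((r (Fin.castLE h i.succ) : ℕ) : ℝ) -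
      ((r (Fin.castLE h i.castSucc) : ℕ) : ℝ)| = totalVariation (fun i => ((r i : ℕ) : ℤ)) := by
  simp [totalVariation]

section Xi

variable {n S : ℝ}

lemma xi_sub_bound_eq (hn : 1 < n) :
    1 - 3 * S / (n ^ 2 - 1) - (n - 2) / (n + 1) = 3 * (n - 1 - S) / (n ^ 2 - 1) := by
  have hsq : n ^ 2 - 1 = (n + 1) * (n - 1) := by ring
  have h₁ : n + 1 ≠ 0 := by linarith
  have h₂ : n - 1 ≠ 0 := by linarith
  rw [hsq]
  field_simp
  ring

lemma xi_le_bound_iff (hn : 1 < n) :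
    1 - 3 * S / (n ^ 2 - 1) ≤ (n - 2) / (n + 1) ↔ n - 1 ≤ S := by
  have hpos : 0 < n ^ 2 - 1 := by nlinarith
  rw [← sub_nonpos, xi_sub_bound_eq hn, div_le_iff₀ hpos, zero_mul]
  constructor <;> intro <;> linarith

lemma xi_eq_bound_iff (hn : 1 < n) :
    1 - 3 * S / (n ^ 2 - 1) = (n - 2) / (n + 1) ↔ S = n - 1 := by
  have hpos : 0 < n ^ 2 - 1 := by nlinarith
  rw [← sub_eq_zero, xi_sub_bound_eq hn, div_eq_zero_iff, or_iff_left hpos.ne']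
  constructor <;> intro <;> linarith

end Xi

/-- With no ties among the y-values, the ranks `r` form a permutation and
Chatterjee's coefficient `ξₙ = 1 - 3·Σ|r_{i+1} - r_i|/(n² - 1)` is at most
`(n-2)/(n+1)`, with equality iff the ranks are sorted ascending or descending. -/
theorem xi_le_max_of_no_ties
    (n : ℕ) (hn : 2 ≤ n) (r : Fin n → Fin n) (hr : Function.Bijective r) :
    1 - 3 * (∑ i : Fin (n - 1),
        |((r (Fin.castLE (by omega) i.succ) : ℕ) : ℝ) -
          ((r (Fin.castLE (by omega) i.castSucc) : ℕ) : ℝ)|) / ((n : ℝ) ^ 2 - 1) ≤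
      ((n : ℝ) - 2) / ((n : ℝ) + 1) ∧
    ((1 - 3 * (∑ i : Fin (n - 1),
        |((r (Fin.castLE (by omega) i.succ) : ℕ) : ℝ) -
          ((r (Fin.castLE (by omega) i.castSucc) : ℕ) : ℝ)|) / ((n : ℝ) ^ 2 - 1) =
        ((n : ℝ) - 2) / ((n : ℝ) + 1)) ↔
      (Monotone r ∨ Antitone r)) := by
  obtain ⟨m, rfl⟩ : ∃ m, n = m + 1 := ⟨n - 1, by omega⟩
  have hn' : (1 : ℝ) < (m + 1 : ℕ) := by exact_mod_cast hn
  have hcard : ((m + 1 : ℕ) : ℝ) - 1 = ((m : ℤ) : ℝ) := by push_cast; ring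
  rw [sum_abs_castLE_eq_totalVariation, xi_le_bound_iff hn', xi_eq_bound_iff hn', hcard,
    Int.cast_le, Int.cast_inj, totalVariation_natCast_val_eq_iff hr.injective]
  exact ⟨le_totalVariation_of_injective (Fin.natCast_val_comp_injective hr.injective), Iff.rfl⟩
end

section
/- In the general tied case, ξ_n(y,y) = 1 - n(n - r_min) / (2·Σ_{i=1}^n l_i(n - l_i)), where r_min is the number of occurrences of the smallest value of y, and this value is strictly positive for n > 2. -/
/-- Rank `r i`: the number of indices `j < n` with `y j ≤ y i`. -/
noncomputable def chatterjeeRank (y : ℕ → ℝ) (n i : ℕ) : ℕ :=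
  ((Finset.range n).filter (fun j => y j ≤ y i)).card

/-- `l i`: the number of indices `j < n` with `y j ≥ y i`. -/
noncomputable def chatterjeeL (y : ℕ → ℝ) (n i : ℕ) : ℕ :=
  ((Finset.range n).filter (fun j => y i ≤ y j)).card

/-- Denominator `2 Σᵢ lᵢ (n - lᵢ)` of Chatterjee's coefficient. -/
noncomputable def chatterjeeDenom (y : ℕ → ℝ) (n : ℕ) : ℝ :=
  2 * ∑ i ∈ Finset.range n,
    ((chatterjeeL y n i : ℝ) * ((n : ℝ) - (chatterjeeL y n i : ℝ)))

/-- Chatterjee's coefficient `ξₙ` computed from the sequence of y-values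
(listed in the order of increasing x-values). -/
noncomputable def chatterjeeXi (y : ℕ → ℝ) (n : ℕ) : ℝ :=
  1 - ((n : ℝ) * ∑ i ∈ Finset.range (n - 1),
        |((chatterjeeRank y n (i + 1) : ℝ)) - ((chatterjeeRank y n i : ℝ))|) /
      chatterjeeDenom y n

/-- For `y` sorted in ascending order (the order used to compute `ξₙ(y,y)`) and not
all values equal: with `rmin` the number of occurrences of the smallest value
(which is `y 0` by sortedness), we have
`ξₙ(y,y) = 1 - n(n - rmin)/(2 Σ lᵢ(n - lᵢ))`, strictly positive for `n > 2`. -/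
theorem xi_self_formula_and_pos
    (n : ℕ) (y : ℕ → ℝ)
    (hsorted : ∀ i j, i ≤ j → j < n → y i ≤ y j)
    (hne : ∃ i j, i < n ∧ j < n ∧ y i ≠ y j) :
    chatterjeeXi y n =
      1 - ((n : ℝ) * ((n : ℝ) - (((Finset.range n).filter (fun j => y j = y 0)).card : ℝ))) /
        chatterjeeDenom y n ∧
    (2 < n →
      0 < 1 - ((n : ℝ) * ((n : ℝ) - (((Finset.range n).filter (fun j => y j = y 0)).card : ℝ))) /
        chatterjeeDenom y n) := by
  classical
  obtain ⟨i0, j0, hi0, hj0, hne0⟩ := hne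
  have hn2 : 2 ≤ n := by
    by_contra h
    push_neg at h
    have hi : i0 = 0 := by omega
    have hj : j0 = 0 := by omega
    rw [hi, hj] at hne0
    exact hne0 rfl
  have hmin : ∀ j, j < n → y 0 ≤ y j := fun j hj => hsorted 0 j (Nat.zero_le _) hj
  set c : ℕ := ((Finset.range n).filter (fun j => y j = y 0)).card with hc
  -- r 0 = c
  have hr0 : chatterjeeRank y n 0 = c := by
    unfold chatterjeeRank
    rw [hc]
    congr 1
    apply Finset.filter_congr
    intro j hj
    simp only [Finset.mem_range] at hj
    constructor
    · intro h; exact le_antisymm h (hmin j hj)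
    · intro h; exact le_of_eq h
  -- r (n-1) = n
  have hrlast : chatterjeeRank y n (n - 1) = n := by
    unfold chatterjeeRank
    rw [Finset.filter_true_of_mem, Finset.card_range]
    intro j hj
    simp only [Finset.mem_range] at hj
    exact hsorted j (n - 1) (by omega) (by omega)
  -- monotonicity of r
  have hrmono : ∀ i, i + 1 < n → chatterjeeRank y n i ≤ chatterjeeRank y n (i + 1) := by
    intro i hi
    unfold chatterjeeRank
    apply Finset.card_le_card
    intro j hj
    simp only [Finset.mem_filter, Finset.mem_range] at *
    exact ⟨hj.1, le_trans hj.2 (hsorted i (i + 1) (Nat.le_succ _) hi)⟩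
  -- telescoping sum
  have hsum : (∑ i ∈ Finset.range (n - 1),
      |((chatterjeeRank y n (i + 1) : ℝ)) - ((chatterjeeRank y n i : ℝ))|)
      = (n : ℝ) - (c : ℝ) := by
    have h1 : ∀ i ∈ Finset.range (n - 1),
        |((chatterjeeRank y n (i + 1) : ℝ)) - ((chatterjeeRank y n i : ℝ))|
        = ((chatterjeeRank y n (i + 1) : ℝ)) - ((chatterjeeRank y n i : ℝ)) := by
      intro i hi
      simp only [Finset.mem_range] at hi
      apply abs_of_nonneg
      rw [sub_nonneg]
      exact_mod_cast hrmono i (by omega)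
    rw [Finset.sum_congr rfl h1,
      Finset.sum_range_sub (fun i => ((chatterjeeRank y n i : ℝ)))]
    rw [hr0, hrlast]
  constructor
  · unfold chatterjeeXi
    rw [hsum]
  · intro hn3
    -- bounds on c
    have hc1 : 1 ≤ c := by
      have : 0 ∈ (Finset.range n).filter (fun j => y j = y 0) := by
        simp [Finset.mem_filter, Finset.mem_range]; omega
      exact Finset.card_pos.mpr ⟨0, this⟩
    have hcn : c < n := by
      have hx : ∃ k, k < n ∧ y k ≠ y 0 := by
        by_cases h : y i0 = y 0
        · exact ⟨j0, hj0, fun hj => hne0 (by rw [h, hj])⟩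
        · exact ⟨i0, hi0, h⟩
      obtain ⟨k, hk, hky⟩ := hx
      have : (Finset.range n).filter (fun j => y j = y 0) ⊂ Finset.range n := by
        rw [Finset.filter_ssubset]
        exact ⟨k, Finset.mem_range.mpr hk, hky⟩
      have := Finset.card_lt_card this
      rwa [Finset.card_range] at this
    -- l bounds for non-minimal indices
    have hl_le_n : ∀ i, chatterjeeL y n i ≤ n := by
      intro i
      calc chatterjeeL y n i ≤ (Finset.range n).card := Finset.card_le_card (Finset.filter_subset _ _)
        _ = n := Finset.card_range n
    have hterm_nonneg : ∀ i, (0:ℝ) ≤ (chatterjeeL y n i : ℝ) * ((n : ℝ) - (chatterjeeL y n i : ℝ)) := by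
      intro i
      apply mul_nonneg (Nat.cast_nonneg _)
      rw [sub_nonneg]
      exact_mod_cast hl_le_n i
    have hkey : ∀ i ∈ (Finset.range n) \ ((Finset.range n).filter (fun j => y j = y 0)),
        (n : ℝ) - 1 ≤ (chatterjeeL y n i : ℝ) * ((n : ℝ) - (chatterjeeL y n i : ℝ)) := by
      intro i hi
      simp only [Finset.mem_sdiff, Finset.mem_filter, Finset.mem_range, not_and] at hi
      obtain ⟨hin, hiy⟩ := hi
      have hiy' : y 0 < y i := lt_of_le_of_ne (hmin i hin) (fun h => (hiy hin) h.symm)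
      have hl1 : 1 ≤ chatterjeeL y n i := by
        apply Finset.card_pos.mpr
        exact ⟨i, by simp [Finset.mem_filter, Finset.mem_range, hin]⟩
      have hl2 : chatterjeeL y n i ≤ n - 1 := by
        have hss : (Finset.range n).filter (fun j => y i ≤ y j) ⊂ Finset.range n := by
          rw [Finset.filter_ssubset]
          exact ⟨0, Finset.mem_range.mpr (by omega), not_le.mpr hiy'⟩
        have := Finset.card_lt_card hss
        rw [Finset.card_range] at this
        unfold chatterjeeL
        omega
      have h1 : (1:ℝ) ≤ (chatterjeeL y n i : ℝ) := by exact_mod_cast hl1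
      have h2 : (chatterjeeL y n i : ℝ) ≤ (n : ℝ) - 1 := by
        have : (chatterjeeL y n i : ℝ) ≤ ((n - 1 : ℕ) : ℝ) := by exact_mod_cast hl2
        rwa [Nat.cast_sub (by omega), Nat.cast_one] at this
      nlinarith
    -- sum lower bound
    have hfsub : (Finset.range n) \ ((Finset.range n).filter (fun j => y j = y 0)) ⊆ Finset.range n :=
      Finset.sdiff_subset
    have hcard_sdiff : ((Finset.range n) \ ((Finset.range n).filter (fun j => y j = y 0))).card = n - c := by
      rw [Finset.card_sdiff_of_subset (Finset.filter_subset _ _), Finset.card_range]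
    have hsumlb : ((n : ℝ) - (c : ℝ)) * ((n : ℝ) - 1)
        ≤ ∑ i ∈ Finset.range n, ((chatterjeeL y n i : ℝ) * ((n : ℝ) - (chatterjeeL y n i : ℝ))) := by
      calc ((n : ℝ) - (c : ℝ)) * ((n : ℝ) - 1)
          = ∑ _i ∈ (Finset.range n) \ ((Finset.range n).filter (fun j => y j = y 0)), ((n : ℝ) - 1) := by
            rw [Finset.sum_const, hcard_sdiff, nsmul_eq_mul]
            rw [Nat.cast_sub (le_of_lt hcn)]
        _ ≤ ∑ i ∈ (Finset.range n) \ ((Finset.range n).filter (fun j => y j = y 0)),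
              ((chatterjeeL y n i : ℝ) * ((n : ℝ) - (chatterjeeL y n i : ℝ))) :=
            Finset.sum_le_sum hkey
        _ ≤ ∑ i ∈ Finset.range n, ((chatterjeeL y n i : ℝ) * ((n : ℝ) - (chatterjeeL y n i : ℝ))) :=
            Finset.sum_le_sum_of_subset_of_nonneg hfsub (fun i _ _ => hterm_nonneg i)
    have hcR : (c : ℝ) < (n : ℝ) := by exact_mod_cast hcn
    have hnR : (2 : ℝ) < (n : ℝ) := by exact_mod_cast hn3
    have hdlb : 2 * (((n : ℝ) - (c : ℝ)) * ((n : ℝ) - 1)) ≤ chatterjeeDenom y n := by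
      unfold chatterjeeDenom
      linarith
    have hdpos : 0 < chatterjeeDenom y n := by nlinarith
    rw [sub_pos, div_lt_one hdpos]
    nlinarith
end

section
/- For y-values not all equal, the sum Σ_{i=1}^n l_i(n - l_i) is at least (n - r_min)(n - 1), where l_i is the number of indices j with y_j ≥ y_i, and r_min is the number of occurrences of the minimum value. -/
lemma mul_lb_aux (a b : ℕ) (ha : 1 ≤ a) (hb : 1 ≤ b) : a + b - 1 ≤ a * b := by
  obtain ⟨a, rfl⟩ := Nat.exists_eq_add_of_le ha
  obtain ⟨b, rfl⟩ := Nat.exists_eq_add_of_le hb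
  have h : (1 + a) * (1 + b) = 1 + a + b + a * b := by ring
  omega

/-- For y-values not all equal, `Σᵢ lᵢ (n - lᵢ) ≥ (n - rmin)(n - 1)`, where
`lᵢ = #{j < n : y j ≥ y i}` and `rmin` is the number of occurrences of the
minimum value. -/
theorem sum_l_ge
    (n : ℕ) (hn : 1 ≤ n) (y : ℕ → ℝ)
    (hne : ∃ i j, i < n ∧ j < n ∧ y i ≠ y j) :
    (n - ((Finset.range n).filter (fun j => y j =
        ((Finset.range n).image y).min' (Finset.Nonempty.image ⟨0, Finset.mem_range.mpr hn⟩ y))).card)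
      * (n - 1) ≤
    ∑ i ∈ Finset.range n,
      ((Finset.range n).filter (fun j => y i ≤ y j)).card *
        (n - ((Finset.range n).filter (fun j => y i ≤ y j)).card) := by
  set m := ((Finset.range n).image y).min' (Finset.Nonempty.image ⟨0, Finset.mem_range.mpr hn⟩ y) with hm
  -- a witness attaining the minimum
  have hmmem : m ∈ (Finset.range n).image y := Finset.min'_mem _ _
  obtain ⟨j0, hj0, hyj0⟩ := Finset.mem_image.mp hmmem
  have hj0n : j0 < n := Finset.mem_range.mp hj0
  set T := (Finset.range n).filter (fun j => ¬ y j = m) with hT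
  have key : ∀ i ∈ T, n - 1 ≤
      ((Finset.range n).filter (fun j => y i ≤ y j)).card *
        (n - ((Finset.range n).filter (fun j => y i ≤ y j)).card) := by
    intro i hi
    obtain ⟨hin, hiy⟩ := Finset.mem_filter.mp hi
    have hin' : i < n := Finset.mem_range.mp hin
    have hmle : m ≤ y i := Finset.min'_le _ _ (Finset.mem_image_of_mem y hin)
    have hmlt : m < y i := lt_of_le_of_ne hmle (fun h => hiy h.symm)
    set L := (Finset.range n).filter (fun j => y i ≤ y j) with hL
    have h1 : 1 ≤ L.card := Finset.card_pos.mpr ⟨i, Finset.mem_filter.mpr ⟨hin, le_refl _⟩⟩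
    have hsub : L ⊆ (Finset.range n).erase j0 := by
      intro j hj
      obtain ⟨hjn, hjy⟩ := Finset.mem_filter.mp hj
      refine Finset.mem_erase.mpr ⟨?_, hjn⟩
      rintro rfl
      rw [hyj0] at hjy
      exact absurd hjy (not_le.mpr hmlt)
    have h2 : L.card ≤ n - 1 := by
      calc L.card ≤ ((Finset.range n).erase j0).card := Finset.card_le_card hsub
        _ = n - 1 := by rw [Finset.card_erase_of_mem hj0, Finset.card_range]
    have h3 : L.card ≤ n := le_trans h2 (Nat.sub_le _ _)
    have h4 : 1 ≤ n - L.card := by omega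
    have := mul_lb_aux L.card (n - L.card) h1 h4
    omega
  calc (n - ((Finset.range n).filter (fun j => y j = m)).card) * (n - 1)
      = T.card * (n - 1) := by
        have := Finset.card_filter_add_card_filter_not
          (s := Finset.range n) (p := fun j => y j = m)
        rw [Finset.card_range, ← hT] at this
        have hc : n - (Finset.filter (fun j => y j = m) (Finset.range n)).card = T.card := by
          omega
        rw [hc]
    _ = ∑ _i ∈ T, (n - 1) := by rw [Finset.sum_const, smul_eq_mul]
    _ ≤ ∑ i ∈ T, ((Finset.range n).filter (fun j => y i ≤ y j)).card *
          (n - ((Finset.range n).filter (fun j => y i ≤ y j)).card) :=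
        Finset.sum_le_sum key
    _ ≤ _ := Finset.sum_le_sum_of_subset (Finset.filter_subset _ _)
end

section
/- For a continuous random variable Y, Chatterjee's dependence measure ξ(X,Y) = ∫ Var(P(Y ≥ t | X)) dμ(t) / ∫ Var(1_{Y≥t}) dμ(t) can be rewritten as ξ(X,Y) = 6 ∫∫ P(Y ≥ t | X = x)² dλ(x) dμ(t) - 2, where λ is the law of X and μ is the law of Y. -/
open MeasureTheory ProbabilityTheory
open scoped ENNReal

namespace ChatterjeeXiAux


variable (ν : Measure ℝ) [IsProbabilityMeasure ν] [NullSingletonClass ν]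

lemma prod_diag_zero : (ν.prod ν) {p : ℝ × ℝ | p.1 = p.2} = 0 := by
  have hd : MeasurableSet {p : ℝ × ℝ | p.1 = p.2} :=
    measurableSet_eq_fun measurable_fst measurable_snd
  rw [Measure.prod_apply hd]
  have h0 : ∀ x : ℝ, ν (Prod.mk x ⁻¹' {p : ℝ × ℝ | p.1 = p.2}) = 0 := by
    intro x
    have : Prod.mk x ⁻¹' {p : ℝ × ℝ | p.1 = p.2} = {x} := by
      ext y; simp [eq_comm]
    rw [this]; exact measure_singleton x
  simp [h0]

lemma lintegral_Ici_eq_half : ∫⁻ t, ν (Set.Ici t) ∂ν = 1 / 2 := by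
  set S : Set (ℝ × ℝ) := {p | p.1 ≤ p.2} with hS
  have hSm : MeasurableSet S := measurableSet_le measurable_fst measurable_snd
  have h1 : (ν.prod ν) S = ∫⁻ t, ν (Set.Ici t) ∂ν := by
    rw [Measure.prod_apply hSm]
    refine lintegral_congr fun t => ?_
    congr 1
  have hswap : (ν.prod ν) {p : ℝ × ℝ | p.2 ≤ p.1} = (ν.prod ν) S := by
    have := Measure.measurePreserving_swap (μ := ν) (ν := ν)
    rw [← this.measure_preimage hSm.nullMeasurableSet]
    rfl
  have hunion : S ∪ {p : ℝ × ℝ | p.2 ≤ p.1} = Set.univ := by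
    ext p; simp [hS, le_total p.1 p.2]
  have hinter : (ν.prod ν) (S ∩ {p : ℝ × ℝ | p.2 ≤ p.1}) = 0 := by
    refine measure_mono_null ?_ (prod_diag_zero ν)
    intro p hp; exact le_antisymm hp.1 hp.2
  have hadd := measure_union_add_inter (μ := ν.prod ν) S
    (measurableSet_le measurable_snd measurable_fst)
  rw [hunion, hinter, add_zero, hswap, measure_univ] at hadd
  rw [← h1]
  exact (ENNReal.eq_div_iff two_ne_zero ENNReal.ofNat_ne_top).mpr (by rw [two_mul]; exact hadd.symm)



lemma three_reals (a b c : ℝ) (h1 : ¬(a<b ∧ a<c)) (h2 : ¬(b<a ∧ b<c))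
    (h3 : ¬(c<a ∧ c<b)) : a=b ∨ a=c ∨ b=c := by
  rcases lt_trichotomy a b with h|h|h <;> rcases lt_trichotomy a c with h'|h'|h' <;>
    rcases lt_trichotomy b c with h''|h''|h'' <;> simp_all <;> linarith

variable (ν : Measure ℝ) [IsProbabilityMeasure ν] [NullSingletonClass ν]

lemma prod_diag_zero' : (ν.prod ν) {p : ℝ × ℝ | p.1 = p.2} = 0 := by
  have hd : MeasurableSet {p : ℝ × ℝ | p.1 = p.2} :=
    measurableSet_eq_fun measurable_fst measurable_snd
  rw [Measure.prod_apply hd]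
  have h0 : ∀ x : ℝ, ν (Prod.mk x ⁻¹' {p : ℝ × ℝ | p.1 = p.2}) = 0 := by
    intro x
    have : Prod.mk x ⁻¹' {p : ℝ × ℝ | p.1 = p.2} = {x} := by
      ext y; simp [eq_comm]
    rw [this]; exact measure_singleton x
  simp [h0]

lemma lintegral_Ici_sq_eq_third :
    ∫⁻ t, ν (Set.Ici t) * ν (Set.Ici t) ∂ν = 1 / 3 := by
  set m3 : Measure (ℝ × ℝ × ℝ) := ν.prod (ν.prod ν) with hm3
  have mc1 : Measurable fun p : ℝ × ℝ × ℝ => p.1 := measurable_fst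
  have mc2 : Measurable fun p : ℝ × ℝ × ℝ => p.2.1 := measurable_fst.comp measurable_snd
  have mc3 : Measurable fun p : ℝ × ℝ × ℝ => p.2.2 := measurable_snd.comp measurable_snd
  -- null sets where two coordinates coincide
  have hD12 : m3 {p : ℝ × ℝ × ℝ | p.1 = p.2.1} = 0 := by
    have hd : MeasurableSet {p : ℝ × ℝ × ℝ | p.1 = p.2.1} := measurableSet_eq_fun mc1 mc2
    rw [hm3, Measure.prod_apply hd]
    have h0 : ∀ x : ℝ, (ν.prod ν) {q : ℝ × ℝ | x = q.1} = 0 := by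
      intro x
      have : {q : ℝ × ℝ | x = q.1} = ({x} : Set ℝ) ×ˢ Set.univ := by
        ext q
        simp only [Set.mem_setOf_eq, Set.mem_prod, Set.mem_singleton_iff, Set.mem_univ, and_true]
        exact eq_comm
      rw [this, Measure.prod_prod]; simp
    rw [show ∫⁻ x, (ν.prod ν) (Prod.mk x ⁻¹' {p : ℝ × ℝ × ℝ | p.1 = p.2.1}) ∂ν
        = ∫⁻ x, (ν.prod ν) {q : ℝ × ℝ | x = q.1} ∂ν from rfl]
    simp only [h0]; exact lintegral_zero
  have hD13 : m3 {p : ℝ × ℝ × ℝ | p.1 = p.2.2} = 0 := by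
    have hd : MeasurableSet {p : ℝ × ℝ × ℝ | p.1 = p.2.2} := measurableSet_eq_fun mc1 mc3
    rw [hm3, Measure.prod_apply hd]
    have h0 : ∀ x : ℝ, (ν.prod ν) {q : ℝ × ℝ | x = q.2} = 0 := by
      intro x
      have : {q : ℝ × ℝ | x = q.2} = (Set.univ : Set ℝ) ×ˢ {x} := by
        ext q
        simp only [Set.mem_setOf_eq, Set.mem_prod, Set.mem_singleton_iff, Set.mem_univ, true_and]
        exact eq_comm
      rw [this, Measure.prod_prod]; simp
    rw [show ∫⁻ x, (ν.prod ν) (Prod.mk x ⁻¹' {p : ℝ × ℝ × ℝ | p.1 = p.2.2}) ∂ν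
        = ∫⁻ x, (ν.prod ν) {q : ℝ × ℝ | x = q.2} ∂ν from rfl]
    simp only [h0]; exact lintegral_zero
  have hD23 : m3 {p : ℝ × ℝ × ℝ | p.2.1 = p.2.2} = 0 := by
    have hd : MeasurableSet {p : ℝ × ℝ × ℝ | p.2.1 = p.2.2} := measurableSet_eq_fun mc2 mc3
    rw [hm3, Measure.prod_apply hd]
    rw [show ∫⁻ x, (ν.prod ν) (Prod.mk x ⁻¹' {p : ℝ × ℝ × ℝ | p.2.1 = p.2.2}) ∂ν
        = ∫⁻ _x, (ν.prod ν) {q : ℝ × ℝ | q.1 = q.2} ∂ν from rfl]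
    simp only [prod_diag_zero' ν]; exact lintegral_zero
  -- the strict sets
  set A1 : Set (ℝ × ℝ × ℝ) := {p | p.1 < p.2.1 ∧ p.1 < p.2.2} with hA1
  set A2 : Set (ℝ × ℝ × ℝ) := {p | p.2.1 < p.1 ∧ p.2.1 < p.2.2} with hA2
  set A3 : Set (ℝ × ℝ × ℝ) := {p | p.2.2 < p.1 ∧ p.2.2 < p.2.1} with hA3
  have hA1m : MeasurableSet A1 := (measurableSet_lt mc1 mc2).inter (measurableSet_lt mc1 mc3)
  have hA2m : MeasurableSet A2 := (measurableSet_lt mc2 mc1).inter (measurableSet_lt mc2 mc3)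
  have hA3m : MeasurableSet A3 := (measurableSet_lt mc3 mc1).inter (measurableSet_lt mc3 mc2)
  -- measure preserving transpositions
  have hswap12 : MeasurePreserving
      (fun p : ℝ × ℝ × ℝ => (p.2.1, (p.1, p.2.2))) m3 m3 := by
    have h1 := (measurePreserving_prodAssoc ν ν ν).symm MeasurableEquiv.prodAssoc
    have h2 := (Measure.measurePreserving_swap (μ := ν) (ν := ν)).prod
      (MeasurePreserving.id ν)
    have h3 := measurePreserving_prodAssoc ν ν ν
    exact (h3.comp h2).comp h1
  have hswap23 : MeasurePreserving
      (fun p : ℝ × ℝ × ℝ => (p.1, (p.2.2, p.2.1))) m3 m3 :=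
    (MeasurePreserving.id ν).prod (Measure.measurePreserving_swap (μ := ν) (ν := ν))
  have hswap13 : MeasurePreserving
      (fun p : ℝ × ℝ × ℝ => (p.2.2, (p.2.1, p.1))) m3 m3 := by
    exact hswap23.comp (hswap12.comp hswap23)
  have e12 : m3 A2 = m3 A1 := hswap12.measure_preimage hA1m.nullMeasurableSet
  have e13 : m3 A3 = m3 A1 := by
    have h := hswap13.measure_preimage hA1m.nullMeasurableSet
    have hset : (fun p : ℝ × ℝ × ℝ => (p.2.2, (p.2.1, p.1))) ⁻¹' A1 = A3 := by
      ext p; exact and_comm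
    rwa [hset] at h
  have hd12 : Disjoint A1 A2 := by
    rw [Set.disjoint_left]; rintro p ⟨h1, h2⟩ ⟨h3, h4⟩; exact absurd (h1.trans h3) (lt_irrefl _)
  have hd3 : Disjoint (A1 ∪ A2) A3 := by
    rw [Set.disjoint_left]
    rintro p (⟨h1, h2⟩ | ⟨h1, h2⟩) ⟨h3, h4⟩
    · exact absurd (h2.trans h3) (lt_irrefl _)
    · exact absurd (h2.trans h4) (lt_irrefl _)
  have hsum : m3 (A1 ∪ A2 ∪ A3) = m3 A1 + m3 A2 + m3 A3 := by
    rw [measure_union hd3 hA3m, measure_union hd12 hA2m]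
  have hcompl : m3 (A1 ∪ A2 ∪ A3)ᶜ = 0 := by
    have hsub : (A1 ∪ A2 ∪ A3)ᶜ ⊆ {p : ℝ × ℝ × ℝ | p.1 = p.2.1} ∪
        ({p : ℝ × ℝ × ℝ | p.1 = p.2.2} ∪ {p : ℝ × ℝ × ℝ | p.2.1 = p.2.2}) := by
      intro p hp
      simp only [Set.mem_compl_iff, Set.mem_union, hA1, hA2, hA3, Set.mem_setOf_eq,
        not_or] at hp
      have := three_reals p.1 p.2.1 p.2.2 hp.1.1 hp.1.2 hp.2
      simpa only [Set.mem_union, Set.mem_setOf_eq] using this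
    exact measure_mono_null hsub (measure_union_null hD12 (measure_union_null hD13 hD23))
  have hUm : MeasurableSet (A1 ∪ A2 ∪ A3) := (hA1m.union hA2m).union hA3m
  have hU1 : m3 (A1 ∪ A2 ∪ A3) = 1 := by
    have h : IsProbabilityMeasure m3 := by rw [hm3]; infer_instance
    exact (prob_compl_eq_zero_iff (μ := m3) hUm).mp hcompl
  have hA1third : m3 A1 = 1 / 3 := by
    refine (ENNReal.eq_div_iff (by norm_num) (by norm_num)).mpr ?_
    have : m3 A1 + m3 A2 + m3 A3 = 3 * m3 A1 := by rw [e12, e13]; ring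
    rw [← this, ← hsum, hU1]
  -- the non-strict set
  set T1 : Set (ℝ × ℝ × ℝ) := {p | p.1 ≤ p.2.1 ∧ p.1 ≤ p.2.2} with hT1
  have hT1m : MeasurableSet T1 := (measurableSet_le mc1 mc2).inter (measurableSet_le mc1 mc3)
  have hT1A1 : m3 T1 = m3 A1 := by
    refine le_antisymm ?_ (measure_mono fun p hp => ⟨le_of_lt hp.1, le_of_lt hp.2⟩)
    have hsub : T1 ⊆ A1 ∪ ({p : ℝ × ℝ × ℝ | p.1 = p.2.1} ∪ {p : ℝ × ℝ × ℝ | p.1 = p.2.2}) := by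
      rintro p ⟨h1, h2⟩
      rcases eq_or_lt_of_le h1 with h | h
      · exact Or.inr (Or.inl h)
      rcases eq_or_lt_of_le h2 with h' | h'
      · exact Or.inr (Or.inr h')
      · exact Or.inl ⟨h, h'⟩
    calc m3 T1 ≤ m3 (A1 ∪ ({p : ℝ × ℝ × ℝ | p.1 = p.2.1} ∪ {p : ℝ × ℝ × ℝ | p.1 = p.2.2})) :=
          measure_mono hsub
      _ ≤ m3 A1 + m3 ({p : ℝ × ℝ × ℝ | p.1 = p.2.1} ∪ {p : ℝ × ℝ × ℝ | p.1 = p.2.2}) :=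
          measure_union_le _ _
      _ = m3 A1 := by rw [measure_union_null hD12 hD13, add_zero]
  have hfinal : m3 T1 = ∫⁻ t, ν (Set.Ici t) * ν (Set.Ici t) ∂ν := by
    rw [hm3, Measure.prod_apply hT1m]
    refine lintegral_congr fun t => ?_
    have : Prod.mk t ⁻¹' T1 = Set.Ici t ×ˢ Set.Ici t := by
      ext q; simp only [hT1, Set.mem_preimage, Set.mem_setOf_eq, Set.mem_prod, Set.mem_Ici]
    rw [this, Measure.prod_prod]
  rw [← hfinal, hT1A1, hA1third]



variable (ν : Measure ℝ) [IsProbabilityMeasure ν] [NullSingletonClass ν]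

lemma meas_Ici_antitone : Antitone fun t : ℝ => ν (Set.Ici t) :=
  fun s t hst => measure_mono (Set.Ici_subset_Ici.mpr hst)

lemma integrable_of_antitone_bdd {f : ℝ → ℝ} (hf : Antitone f) (h1 : ∀ t, |f t| ≤ 1) :
    Integrable f ν :=
  (integrable_const (1 : ℝ)).mono' hf.measurable.aestronglyMeasurable
    (ae_of_all _ fun t => by simpa using h1 t)

lemma integral_F (h : ∫⁻ t, ν (Set.Ici t) ∂ν = 1 / 2) :
    ∫ t, (ν (Set.Ici t)).toReal ∂ν = 1 / 2 := by
  rw [integral_toReal ((meas_Ici_antitone ν).measurable.aemeasurable)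
    (ae_of_all _ fun t => lt_of_le_of_lt prob_le_one (by norm_num)), h]
  simp [ENNReal.toReal_div]

lemma integral_F_sq (h : ∫⁻ t, ν (Set.Ici t) * ν (Set.Ici t) ∂ν = 1 / 3) :
    ∫ t, ((ν (Set.Ici t)).toReal) ^ 2 ∂ν = 1 / 3 := by
  have hsq : ∀ t : ℝ, ((ν (Set.Ici t)).toReal) ^ 2 = (ν (Set.Ici t) * ν (Set.Ici t)).toReal := by
    intro t; rw [ENNReal.toReal_mul, sq]
  rw [integral_congr_ae (ae_of_all _ hsq),
    integral_toReal (f := fun t => ν (Set.Ici t) * ν (Set.Ici t)) (((meas_Ici_antitone ν).measurable.aemeasurable).mul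
      ((meas_Ici_antitone ν).measurable.aemeasurable))
    (ae_of_all _ fun t => lt_of_le_of_lt (mul_le_one' prob_le_one prob_le_one) (by norm_num)), h]
  simp [ENNReal.toReal_div]



variable {Ω : Type*} [MeasurableSpace Ω] (μ : Measure Ω) [IsProbabilityMeasure μ]
  (X Y : Ω → ℝ)

lemma compProd_eq (hX : Measurable X) (hY : Measurable Y) :
    μ.map X ⊗ₘ condDistrib Y X μ = μ.map fun a => (X a, Y a) := by
  have : IsProbabilityMeasure (μ.map fun a => (X a, Y a)) :=
    Measure.isProbabilityMeasure_map (hX.prodMk hY).aemeasurable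
  exact compProd_map_condDistrib hY.aemeasurable

lemma lintegral_condDistrib_Ici (hX : Measurable X) (hY : Measurable Y) (t : ℝ) :
    ∫⁻ x, condDistrib Y X μ x (Set.Ici t) ∂(μ.map X) = μ.map Y (Set.Ici t) := by
  have hcp := compProd_eq μ X Y hX hY
  have h1 : μ.map Y (Set.Ici t) = (μ.map fun a => (X a, Y a)) (Set.univ ×ˢ Set.Ici t) := by
    rw [Measure.map_apply hY measurableSet_Ici,
      Measure.map_apply (hX.prodMk hY) (MeasurableSet.univ.prod measurableSet_Ici)]
    congr 1; ext ω; simp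
  rw [h1, ← hcp, Measure.compProd_apply_prod MeasurableSet.univ measurableSet_Ici,
    Measure.restrict_univ]

lemma integral_condDistrib_Ici (hX : Measurable X) (hY : Measurable Y) (t : ℝ) :
    ∫ x, (condDistrib Y X μ x (Set.Ici t)).toReal ∂(μ.map X) = (μ.map Y (Set.Ici t)).toReal := by
  rw [integral_toReal ((Kernel.measurable_coe _ measurableSet_Ici).aemeasurable)
    (ae_of_all _ fun x => lt_of_le_of_lt prob_le_one ENNReal.one_lt_top),
    lintegral_condDistrib_Ici μ X Y hX hY t]

lemma variance_indicator (hY : Measurable Y) (t : ℝ) :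
    variance (fun ω => (Set.Ici t).indicator (fun _ => (1:ℝ)) (Y ω)) μ
      = (μ.map Y (Set.Ici t)).toReal - ((μ.map Y (Set.Ici t)).toReal) ^ 2 := by
  have hsm : MeasurableSet (Y ⁻¹' Set.Ici t) := hY measurableSet_Ici
  have hfeq : (fun ω => (Set.Ici t).indicator (fun _ => (1:ℝ)) (Y ω))
      = (Y ⁻¹' Set.Ici t).indicator (fun _ => (1:ℝ)) := by
    ext ω; by_cases h : Y ω ∈ Set.Ici t <;> simp [Set.indicator, h]
  rw [hfeq]
  have hmem : MemLp ((Y ⁻¹' Set.Ici t).indicator (fun _ => (1:ℝ))) 2 μ :=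
    memLp_indicator_const 2 hsm 1 (Or.inr (measure_ne_top μ _))
  rw [variance_eq_sub hmem]
  have hsq : ((Y ⁻¹' Set.Ici t).indicator (fun _ => (1:ℝ))) ^ 2
      = (Y ⁻¹' Set.Ici t).indicator (fun _ => (1:ℝ)) := by
    ext ω; by_cases h : ω ∈ Y ⁻¹' Set.Ici t <;> simp [h]
  rw [hsq, integral_indicator_const (1:ℝ) hsm, Measure.map_apply hY measurableSet_Ici]
  simp
  rfl

lemma variance_condDistrib (hX : Measurable X) (hY : Measurable Y) (t : ℝ) :
    variance (fun ω => (condDistrib Y X μ (X ω) (Set.Ici t)).toReal) μ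
      = (∫ x, ((condDistrib Y X μ x) (Set.Ici t)).toReal ^ 2 ∂(μ.map X))
        - ((μ.map Y (Set.Ici t)).toReal) ^ 2 := by
  set g : ℝ → ℝ := fun x => (condDistrib Y X μ x (Set.Ici t)).toReal with hg
  have hgm : Measurable g := (Kernel.measurable_coe _ measurableSet_Ici).ennreal_toReal
  have hb : ∀ x, ‖g x‖ ≤ 1 := by
    intro x
    rw [Real.norm_eq_abs, abs_of_nonneg ENNReal.toReal_nonneg]
    have h1 : condDistrib Y X μ x (Set.Ici t) ≤ 1 := prob_le_one
    calc (condDistrib Y X μ x (Set.Ici t)).toReal ≤ (1 : ℝ≥0∞).toReal :=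
          ENNReal.toReal_mono ENNReal.one_ne_top h1
      _ = 1 := by simp
  have hmem : MemLp (fun ω => g (X ω)) 2 μ :=
    MemLp.of_bound ((hgm.comp hX).aestronglyMeasurable) 1 (ae_of_all _ fun ω => hb (X ω))
  rw [variance_eq_sub hmem]
  have h2 : μ[(fun ω => g (X ω)) ^ 2] = ∫ x, g x ^ 2 ∂(μ.map X) := by
    rw [integral_map hX.aemeasurable ((hgm.pow_const 2).aestronglyMeasurable)]
    rfl
  have h1 : μ[fun ω => g (X ω)] = (μ.map Y (Set.Ici t)).toReal := by
    rw [← integral_condDistrib_Ici μ X Y hX hY t,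
      integral_map hX.aemeasurable hgm.aestronglyMeasurable]
  rw [h2, h1]


end ChatterjeeXiAux

open ChatterjeeXiAux

/-- For a continuous random variable `Y` (atomless law `μ.map Y`), Chatterjee's
dependence measure
`ξ(X,Y) = ∫ Var(P(Y ≥ t | X)) dμ_Y(t) / ∫ Var(1_{Y ≥ t}) dμ_Y(t)`
can be rewritten as `ξ(X,Y) = 6 ∫∫ P(Y ≥ t | X = x)² dλ(x) dμ_Y(t) - 2`,
where `λ = μ.map X` is the law of `X` and the conditional probability
`P(Y ≥ t | X = x)` is given by the regular conditional distribution
`condDistrib Y X μ`. -/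
theorem xi_eq_six_int_sq_sub_two
    {Ω : Type*} [MeasurableSpace Ω] (μ : Measure Ω) [IsProbabilityMeasure μ]
    (X Y : Ω → ℝ) (hX : Measurable X) (hY : Measurable Y)
    [NullSingletonClass (μ.map Y)]
    (hden : ∫ t, variance (fun ω => (Set.Ici t).indicator (fun _ => (1 : ℝ)) (Y ω)) μ
        ∂(μ.map Y) ≠ 0) :
    (∫ t, variance (fun ω => ((condDistrib Y X μ) (X ω) (Set.Ici t)).toReal) μ ∂(μ.map Y)) /
      (∫ t, variance (fun ω => (Set.Ici t).indicator (fun _ => (1 : ℝ)) (Y ω)) μ ∂(μ.map Y)) =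
    6 * (∫ t, ∫ x, (((condDistrib Y X μ) x (Set.Ici t)).toReal) ^ 2 ∂(μ.map X) ∂(μ.map Y)) - 2 := by
  set ν := μ.map Y with hν
  set lam := μ.map X with hlam
  have hνprob : IsProbabilityMeasure ν := Measure.isProbabilityMeasure_map hY.aemeasurable
  have hlamprob : IsProbabilityMeasure lam := Measure.isProbabilityMeasure_map hX.aemeasurable
  -- F and its properties
  set F : ℝ → ℝ := fun t => (ν (Set.Ici t)).toReal with hF
  have hFanti : Antitone F := fun s t hst =>
    ENNReal.toReal_mono (measure_ne_top ν _) (measure_mono (Set.Ici_subset_Ici.mpr hst))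
  have hFnonneg : ∀ t, 0 ≤ F t := fun t => ENNReal.toReal_nonneg
  have hFle1 : ∀ t, F t ≤ 1 := fun t => by
    calc F t ≤ (1 : ℝ≥0∞).toReal := ENNReal.toReal_mono ENNReal.one_ne_top prob_le_one
      _ = 1 := by simp
  have hFabs : ∀ t, |F t| ≤ 1 := fun t => by
    rw [abs_of_nonneg (hFnonneg t)]; exact hFle1 t
  have hFint : Integrable F ν := integrable_of_antitone_bdd ν hFanti hFabs
  have hFsqanti : Antitone fun t => F t ^ 2 := fun s t hst =>
    pow_le_pow_left₀ (hFnonneg t) (hFanti hst) 2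
  have hFsqabs : ∀ t, |F t ^ 2| ≤ 1 := fun t => by
    rw [abs_of_nonneg (sq_nonneg _)]
    calc F t ^ 2 ≤ 1 ^ 2 := pow_le_pow_left₀ (hFnonneg t) (hFle1 t) 2
      _ = 1 := one_pow 2
  have hFsqint : Integrable (fun t => F t ^ 2) ν := integrable_of_antitone_bdd ν hFsqanti hFsqabs
  have hint_F : ∫ t, F t ∂ν = 1 / 2 := integral_F ν (lintegral_Ici_eq_half ν)
  have hint_Fsq : ∫ t, F t ^ 2 ∂ν = 1 / 3 := integral_F_sq ν (lintegral_Ici_sq_eq_third ν)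
  -- denominator
  have hdenom : (∫ t, variance (fun ω => (Set.Ici t).indicator (fun _ => (1 : ℝ)) (Y ω)) μ ∂ν)
      = 1 / 6 := by
    have hcongr : ∀ t : ℝ, variance (fun ω => (Set.Ici t).indicator (fun _ => (1 : ℝ)) (Y ω)) μ
        = F t - F t ^ 2 := fun t => variance_indicator μ Y hY t
    rw [integral_congr_ae (ae_of_all _ hcongr), integral_sub hFint hFsqint, hint_F, hint_Fsq]
    norm_num
  -- the inner integral of squares
  set H : ℝ → ℝ := fun t => ∫ x, ((condDistrib Y X μ) x (Set.Ici t)).toReal ^ 2 ∂lam with hH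
  have hgm : ∀ t : ℝ, Measurable fun x => ((condDistrib Y X μ) x (Set.Ici t)).toReal :=
    fun t => (Kernel.measurable_coe _ measurableSet_Ici).ennreal_toReal
  have hgle1 : ∀ (t : ℝ) (x : ℝ), ((condDistrib Y X μ) x (Set.Ici t)).toReal ≤ 1 := by
    intro t x
    calc ((condDistrib Y X μ) x (Set.Ici t)).toReal ≤ (1 : ℝ≥0∞).toReal :=
          ENNReal.toReal_mono ENNReal.one_ne_top prob_le_one
      _ = 1 := by simp
  have hgsqint : ∀ t : ℝ, Integrable
      (fun x => ((condDistrib Y X μ) x (Set.Ici t)).toReal ^ 2) lam := by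
    intro t
    refine (integrable_const (1 : ℝ)).mono' ((hgm t).pow_const 2).aestronglyMeasurable
      (ae_of_all _ fun x => ?_)
    rw [Real.norm_eq_abs, abs_of_nonneg (sq_nonneg _)]
    calc ((condDistrib Y X μ) x (Set.Ici t)).toReal ^ 2 ≤ 1 ^ 2 :=
          pow_le_pow_left₀ ENNReal.toReal_nonneg (hgle1 t x) 2
      _ = 1 := one_pow 2
  have hHanti : Antitone H := by
    intro s t hst
    refine integral_mono (hgsqint t) (hgsqint s) fun x => ?_
    exact pow_le_pow_left₀ ENNReal.toReal_nonneg
      (ENNReal.toReal_mono (measure_ne_top _ _)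
        (measure_mono (Set.Ici_subset_Ici.mpr hst))) 2
  have hHabs : ∀ t, |H t| ≤ 1 := by
    intro t
    rw [abs_of_nonneg (integral_nonneg fun x => sq_nonneg _)]
    calc H t ≤ ∫ _x, (1 : ℝ) ∂lam := by
          refine integral_mono (hgsqint t) (integrable_const 1) fun x => ?_
          calc ((condDistrib Y X μ) x (Set.Ici t)).toReal ^ 2 ≤ 1 ^ 2 :=
                pow_le_pow_left₀ ENNReal.toReal_nonneg (hgle1 t x) 2
            _ = 1 := one_pow 2
      _ = 1 := by simp
  have hHint : Integrable H ν := integrable_of_antitone_bdd ν hHanti hHabs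
  -- numerator
  have hnum : (∫ t, variance (fun ω => ((condDistrib Y X μ) (X ω) (Set.Ici t)).toReal) μ ∂ν)
      = (∫ t, H t ∂ν) - 1 / 3 := by
    have hcongr : ∀ t : ℝ,
        variance (fun ω => ((condDistrib Y X μ) (X ω) (Set.Ici t)).toReal) μ
          = H t - F t ^ 2 := fun t => variance_condDistrib μ X Y hX hY t
    rw [integral_congr_ae (ae_of_all _ hcongr), integral_sub hHint hFsqint, hint_Fsq]
  rw [hdenom, hnum]
  have : (∫ t, H t ∂ν) = ∫ t, ∫ x, (((condDistrib Y X μ) x (Set.Ici t)).toReal) ^ 2 ∂lam ∂ν := rfl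
  rw [this]
  set I := ∫ t, ∫ x, (((condDistrib Y X μ) x (Set.Ici t)).toReal) ^ 2 ∂lam ∂ν
  field_simp
  ring
end

section
/- If X and Y are independent and Y is continuous (atomless law), then ∫∫ P(Y ≥ t | X = x)² dλ(x) dμ(t) = 1/3 and hence ξ(X,Y) = 0. -/
open MeasureTheory ProbabilityTheory

lemma diag_null (ν : Measure ℝ) [SFinite ν] [NullSingletonClass ν] :
    (ν.prod ν) {p : ℝ × ℝ | p.1 = p.2} = 0 := by
  rw [Measure.prod_apply (measurableSet_eq_fun measurable_fst measurable_snd)]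
  have : ∀ x : ℝ, ν (Prod.mk x ⁻¹' {p : ℝ × ℝ | p.1 = p.2}) = 0 := by
    intro x
    have : (Prod.mk x ⁻¹' {p : ℝ × ℝ | p.1 = p.2}) = {x} := by
      ext y; simp [eq_comm]
    rw [this, measure_singleton]
  simp [this]

lemma half (ν : Measure ℝ) [SFinite ν] [NullSingletonClass ν] (u : Set ℝ) (hu : MeasurableSet u) :
    2 * (ν.prod ν) ((u ×ˢ u) ∩ {p : ℝ × ℝ | p.1 ≤ p.2}) = ν u * ν u := by
  have hle : MeasurableSet {p : ℝ × ℝ | p.1 ≤ p.2} :=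
    measurableSet_le measurable_fst measurable_snd
  have hA : MeasurableSet ((u ×ˢ u) ∩ {p : ℝ × ℝ | p.1 ≤ p.2}) := (hu.prod hu).inter hle
  have hswap : (ν.prod ν) ((u ×ˢ u) ∩ {p : ℝ × ℝ | p.1 ≤ p.2})
      = (ν.prod ν) ((u ×ˢ u) ∩ {p : ℝ × ℝ | p.2 ≤ p.1}) := by
    conv_lhs => rw [← Measure.prod_swap]
    rw [Measure.map_apply measurable_swap hA]
    congr 1
    ext p
    simp only [Set.mem_preimage, Set.mem_inter_iff, Set.mem_prod, Set.mem_setOf_eq, Prod.fst_swap,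
      Prod.snd_swap]
    tauto
  have hunion : ((u ×ˢ u) ∩ {p : ℝ × ℝ | p.1 ≤ p.2}) ∪ ((u ×ˢ u) ∩ {p : ℝ × ℝ | p.2 ≤ p.1})
      = u ×ˢ u := by
    ext p
    simp only [Set.mem_union, Set.mem_inter_iff, Set.mem_setOf_eq]
    constructor
    · rintro (⟨h, _⟩ | ⟨h, _⟩) <;> exact h
    · intro h
      rcases le_total p.1 p.2 with h' | h'
      · exact Or.inl ⟨h, h'⟩
      · exact Or.inr ⟨h, h'⟩
  have hinter : (ν.prod ν) (((u ×ˢ u) ∩ {p : ℝ × ℝ | p.1 ≤ p.2})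
      ∩ ((u ×ˢ u) ∩ {p : ℝ × ℝ | p.2 ≤ p.1})) = 0 := by
    refine measure_mono_null ?_ (diag_null ν)
    rintro p ⟨⟨-, h1⟩, ⟨-, h2⟩⟩
    exact le_antisymm h1 h2
  calc 2 * (ν.prod ν) ((u ×ˢ u) ∩ {p : ℝ × ℝ | p.1 ≤ p.2})
      = (ν.prod ν) ((u ×ˢ u) ∩ {p : ℝ × ℝ | p.1 ≤ p.2})
        + (ν.prod ν) ((u ×ˢ u) ∩ {p : ℝ × ℝ | p.2 ≤ p.1}) := by rw [two_mul, hswap]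
    _ = (ν.prod ν) (((u ×ˢ u) ∩ {p : ℝ × ℝ | p.1 ≤ p.2})
          ∪ ((u ×ˢ u) ∩ {p : ℝ × ℝ | p.2 ≤ p.1}))
        + (ν.prod ν) (((u ×ˢ u) ∩ {p : ℝ × ℝ | p.1 ≤ p.2})
          ∩ ((u ×ˢ u) ∩ {p : ℝ × ℝ | p.2 ≤ p.1})) :=
      (measure_union_add_inter _ ((hu.prod hu).inter
        (measurableSet_le measurable_snd measurable_fst))).symm
    _ = ν u * ν u := by rw [hunion, hinter, add_zero, Measure.prod_prod]

lemma lintegral_sq_Ici (ν : Measure ℝ) [IsProbabilityMeasure ν] [NullSingletonClass ν] :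
    ∫⁻ t, (ν (Set.Ici t)) ^ 2 ∂ν = 1 / 3 := by
  have gmeas : Measurable fun t : ℝ => ν (Set.Ici t) :=
    Antitone.measurable fun a b hab => measure_mono (Set.Ici_subset_Ici.2 hab)
  have fmeas : Measurable fun t : ℝ => ν (Set.Iic t) :=
    Monotone.measurable fun a b hab => measure_mono (Set.Iic_subset_Iic.2 hab)
  have hle : MeasurableSet {p : ℝ × ℝ | p.1 ≤ p.2} :=
    measurableSet_le measurable_fst measurable_snd
  -- 2 ∫ g = 1
  have hI1 : 2 * ∫⁻ t, ν (Set.Ici t) ∂ν = 1 := by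
    have h0 : (ν.prod ν) {p : ℝ × ℝ | p.1 ≤ p.2} = ∫⁻ t, ν (Set.Ici t) ∂ν := by
      rw [Measure.prod_apply hle]
      refine lintegral_congr fun t => ?_
      have : Prod.mk t ⁻¹' {p : ℝ × ℝ | p.1 ≤ p.2} = Set.Ici t := by ext y; simp
      rw [this]
    have := half ν Set.univ MeasurableSet.univ
    simpa [h0] using this
  -- key: 2 ∫_{Ici t} g = g t ^ 2
  have hkey : ∀ t : ℝ, 2 * ∫⁻ y in Set.Ici t, ν (Set.Ici y) ∂ν = (ν (Set.Ici t)) ^ 2 := by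
    intro t
    have h0 : (ν.prod ν) ((Set.Ici t ×ˢ Set.Ici t) ∩ {p : ℝ × ℝ | p.1 ≤ p.2})
        = ∫⁻ y in Set.Ici t, ν (Set.Ici y) ∂ν := by
      rw [Measure.prod_apply (((measurableSet_Ici).prod measurableSet_Ici).inter hle),
        ← lintegral_indicator measurableSet_Ici]
      refine lintegral_congr fun y => ?_
      rcases le_or_gt t y with h | h
      · have : (Prod.mk y ⁻¹' ((Set.Ici t ×ˢ Set.Ici t) ∩ {p : ℝ × ℝ | p.1 ≤ p.2}))
            = Set.Ici y := by
          ext z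
          simp only [Set.mem_preimage, Set.mem_inter_iff, Set.mem_prod, Set.mem_Ici,
            Set.mem_setOf_eq]
          constructor
          · rintro ⟨_, hz⟩; exact hz
          · intro hz; exact ⟨⟨h, le_trans h hz⟩, hz⟩
        rw [this]; simp [Set.indicator_apply, h]
      · have : (Prod.mk y ⁻¹' ((Set.Ici t ×ˢ Set.Ici t) ∩ {p : ℝ × ℝ | p.1 ≤ p.2}))
            = ∅ := by
          ext z
          simp only [Set.mem_preimage, Set.mem_inter_iff, Set.mem_prod, Set.mem_Ici,
            Set.mem_setOf_eq, Set.mem_empty_iff_false, iff_false]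
          rintro ⟨⟨h1, -⟩, -⟩
          exact absurd h1 (not_le.2 h)
        rw [this]; simp [Set.indicator_apply, h.not_ge]
    rw [← h0, half ν (Set.Ici t) measurableSet_Ici, sq]
  -- swap
  have hswap : ∫⁻ t, (∫⁻ y in Set.Ici t, ν (Set.Ici y) ∂ν) ∂ν
      = ∫⁻ y, ν (Set.Ici y) * ν (Set.Iic y) ∂ν := by
    have hF : AEMeasurable (Function.uncurry fun t y : ℝ =>
        ({p : ℝ × ℝ | p.1 ≤ p.2}).indicator (fun p => ν (Set.Ici p.2)) (t, y)) (ν.prod ν) := by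
      refine (Measurable.indicator (gmeas.comp measurable_snd) hle).comp ?_ |>.aemeasurable
      exact measurable_id
    calc ∫⁻ t, (∫⁻ y in Set.Ici t, ν (Set.Ici y) ∂ν) ∂ν
        = ∫⁻ t, ∫⁻ y, ({p : ℝ × ℝ | p.1 ≤ p.2}).indicator
            (fun p => ν (Set.Ici p.2)) (t, y) ∂ν ∂ν := by
          refine lintegral_congr fun t => ?_
          rw [← lintegral_indicator measurableSet_Ici]
          refine lintegral_congr fun y => ?_
          rcases le_or_gt t y with h | h
          · simp [Set.indicator_apply, h]
          · simp [Set.indicator_apply, h.not_ge]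
      _ = ∫⁻ y, ∫⁻ t, ({p : ℝ × ℝ | p.1 ≤ p.2}).indicator
            (fun p => ν (Set.Ici p.2)) (t, y) ∂ν ∂ν := lintegral_lintegral_swap hF
      _ = ∫⁻ y, ν (Set.Ici y) * ν (Set.Iic y) ∂ν := by
          refine lintegral_congr fun y => ?_
          have : ∀ t : ℝ, ({p : ℝ × ℝ | p.1 ≤ p.2}).indicator (fun p => ν (Set.Ici p.2)) (t, y)
              = (Set.Iic y).indicator (fun _ => ν (Set.Ici y)) t := by
            intro t
            rcases le_or_gt t y with h | h
            · simp [Set.indicator_apply, h]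
            · simp [Set.indicator_apply, h.not_ge]
          simp_rw [this]
          rw [lintegral_indicator measurableSet_Iic, setLIntegral_const, mul_comm]
  -- f + g = 1
  have hfg : ∀ y : ℝ, ν (Set.Iic y) + ν (Set.Ici y) = 1 := by
    intro y
    have := measure_union_add_inter (μ := ν) (Set.Iic y) (measurableSet_Ici (a := y))
    rw [Set.Iic_union_Ici, Set.Iic_inter_Ici, Set.Icc_self, measure_singleton, add_zero,
      measure_univ] at this
    exact this.symm
  -- combine
  set A := ∫⁻ t, (ν (Set.Ici t)) ^ 2 ∂ν with hA
  have hD : 2 * ∫⁻ y, ν (Set.Ici y) * ν (Set.Iic y) ∂ν = A := by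
    rw [← hswap, ← lintegral_const_mul' _ _ (by norm_num : (2 : ENNReal) ≠ ⊤)]
    exact lintegral_congr fun t => hkey t
  have hsum : (∫⁻ y, ν (Set.Ici y) * ν (Set.Iic y) ∂ν) + A = ∫⁻ t, ν (Set.Ici t) ∂ν := by
    rw [hA, ← lintegral_add_left (f := fun y => ν (Set.Ici y) * ν (Set.Iic y)) (gmeas.mul fmeas)]
    refine lintegral_congr fun y => ?_
    rw [sq, ← mul_add, hfg y, mul_one]
  have h3 : 3 * A = 1 := by
    have := congrArg (fun x => 2 * x) hsum
    simp only [mul_add] at this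
    rw [hD, hI1] at this
    calc 3 * A = A + 2 * A := by ring
      _ = 1 := this
  rw [ENNReal.eq_div_iff (by norm_num) (by norm_num)]
  exact h3

/-- If `X` and `Y` are independent and `Y` is continuous (atomless law), then
`∫∫ P(Y ≥ t | X = x)² dλ(x) dμ_Y(t) = 1/3`, and hence
`ξ(X,Y) = 6 ∫∫ P(Y ≥ t | X = x)² dλ(x) dμ_Y(t) - 2 = 0`. -/
theorem xi_eq_zero_of_indep
    {Ω : Type*} [MeasurableSpace Ω] (μ : Measure Ω) [IsProbabilityMeasure μ]
    (X Y : Ω → ℝ) (hX : Measurable X) (hY : Measurable Y)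
    [NullSingletonClass (μ.map Y)]
    (hindep : IndepFun X Y μ) :
    (∫ t, ∫ x, (((condDistrib Y X μ) x (Set.Ici t)).toReal) ^ 2 ∂(μ.map X) ∂(μ.map Y)) = 1 / 3 ∧
    6 * (∫ t, ∫ x, (((condDistrib Y X μ) x (Set.Ici t)).toReal) ^ 2 ∂(μ.map X) ∂(μ.map Y)) - 2
      = 0 := by
  haveI : IsProbabilityMeasure (μ.map X) := Measure.isProbabilityMeasure_map hX.aemeasurable
  haveI : IsProbabilityMeasure (μ.map Y) := Measure.isProbabilityMeasure_map hY.aemeasurable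
  have hprod : μ.map (fun ω => (X ω, Y ω)) = (μ.map X).prod (μ.map Y) :=
    (ProbabilityTheory.indepFun_iff_map_prod_eq_prod_map_map hX.aemeasurable
      hY.aemeasurable).mp hindep
  have hκ : μ.map (fun ω => (X ω, Y ω)) = μ.map X ⊗ₘ (Kernel.const ℝ (μ.map Y)) := by
    rw [Measure.compProd_const]; exact hprod
  have hae : ∀ᵐ x ∂μ.map X, (Kernel.const ℝ (μ.map Y)) x = condDistrib Y X μ x :=
    (condDistrib_ae_eq_of_measure_eq_compProd X hY.aemeasurable hκ).mono fun x hx => hx.symm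
  have hinner : ∀ t : ℝ, ∫ x, ((condDistrib Y X μ) x (Set.Ici t)).toReal ^ 2 ∂(μ.map X)
      = ((μ.map Y) (Set.Ici t)).toReal ^ 2 := by
    intro t
    rw [integral_congr_ae (hae.mono fun x hx => ?_), integral_const, probReal_univ,
      one_smul]
    rw [← hx, Kernel.const_apply]
  have gmeas : Measurable fun t : ℝ => (μ.map Y) (Set.Ici t) :=
    Antitone.measurable fun a b hab => measure_mono (Set.Ici_subset_Ici.2 hab)
  have hmain : (∫ t, ∫ x, (((condDistrib Y X μ) x (Set.Ici t)).toReal) ^ 2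
      ∂(μ.map X) ∂(μ.map Y)) = 1 / 3 := by
    simp_rw [hinner]
    have h1 : ∫ t, ((μ.map Y) (Set.Ici t)).toReal ^ 2 ∂(μ.map Y)
        = (∫⁻ t, ((μ.map Y) (Set.Ici t)) ^ 2 ∂(μ.map Y)).toReal := by
      rw [← integral_toReal ((gmeas.pow_const 2).aemeasurable)
        (ae_of_all _ fun t => ENNReal.pow_lt_top (n := 2) (measure_lt_top _ _))]
      simp_rw [ENNReal.toReal_pow]
    rw [h1, lintegral_sq_Ici (μ.map Y)]
    simp [ENNReal.toReal_div]
  exact ⟨hmain, by rw [hmain]; norm_num⟩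
end

section
/- If Y = f(X) for a measurable function f and Y has an atomless law, then ∫∫ P(Y ≥ t | X = x)² dλ(x) dμ(t) = ∫ P(Y ≥ t) dμ(t) = 1/2, hence ξ(X,Y) = 1. -/
open MeasureTheory ProbabilityTheory

/-- For an atomless probability measure `ν` on `ℝ`, `∫ t, ν (Ici t) dν = 1/2`. -/
lemma integral_Ici_eq_half (ν : Measure ℝ) [IsProbabilityMeasure ν] [NullSingletonClass ν] :
    (∫ t, (ν (Set.Ici t)).toReal ∂ν) = 1 / 2 := by
  have hmeas : Measurable fun t => ν (Set.Ici t) := by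
    apply Antitone.measurable
    intro a b hab
    exact measure_mono (Set.Ici_subset_Ici.2 hab)
  have hmeas' : Measurable fun t => ν (Set.Iic t) := by
    apply Monotone.measurable
    intro a b hab
    exact measure_mono (Set.Iic_subset_Iic.2 hab)
  set I := ∫⁻ t, ν (Set.Ici t) ∂ν with hI
  set J := ∫⁻ t, ν (Set.Iic t) ∂ν with hJ
  have hsle : MeasurableSet {p : ℝ × ℝ | p.1 ≤ p.2} :=
    measurableSet_le measurable_fst measurable_snd
  have hIprod : I = (ν.prod ν) {p : ℝ × ℝ | p.1 ≤ p.2} := by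
    rw [Measure.prod_apply hsle]
    rfl
  have hJprod : J = (ν.prod ν) {p : ℝ × ℝ | p.2 ≤ p.1} := by
    rw [Measure.prod_apply (measurableSet_le measurable_snd measurable_fst)]
    rfl
  have hIJ : I = J := by
    rw [hIprod, hJprod]
    conv_lhs => rw [← Measure.prod_swap]
    rw [Measure.map_apply measurable_swap hsle]
    rfl
  have hsum : ∀ t, ν (Set.Ici t) + ν (Set.Iic t) = 1 := by
    intro t
    have h := measure_union_add_inter (μ := ν) (t := Set.Iic t) (Set.Ici t) measurableSet_Iic
    rw [Set.union_comm, Set.Iic_union_Ici, Set.Ici_inter_Iic, Set.Icc_self, measure_singleton,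
      measure_univ, add_zero] at h
    exact h.symm
  have hIJ1 : I + J = 1 := by
    rw [hI, hJ, ← lintegral_add_left hmeas]
    simp only [hsum]
    simp
  have hII : I + I = 1 := by rw [hIJ] at hIJ1 ⊢; exact hIJ1
  have hIfin : I ≠ ⊤ := by
    intro h
    rw [h] at hII
    simp at hII
  have htr : I.toReal + I.toReal = 1 := by
    have := congrArg ENNReal.toReal hII
    rwa [ENNReal.toReal_add hIfin hIfin, ENNReal.toReal_one] at this
  have hint : (∫ t, (ν (Set.Ici t)).toReal ∂ν) = I.toReal := by
    rw [hI, integral_toReal hmeas.aemeasurable]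
    exact ae_of_all _ fun t => measure_lt_top ν _
  rw [hint]
  linarith

/-- If `Y = f(X)` for a measurable `f` and the law of `Y` is atomless, then
`∫∫ P(Y ≥ t | X = x)² dλ(x) dμ_Y(t) = ∫ P(Y ≥ t) dμ_Y(t) = 1/2`, and hence
`ξ(X,Y) = 6 ∫∫ P(Y ≥ t | X = x)² dλ(x) dμ_Y(t) - 2 = 1`. -/
theorem xi_eq_one_of_function
    {Ω : Type*} [MeasurableSpace Ω] (μ : Measure Ω) [IsProbabilityMeasure μ]
    (X : Ω → ℝ) (hX : Measurable X) (f : ℝ → ℝ) (hf : Measurable f)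
    (Y : Ω → ℝ) (hYf : Y = fun ω => f (X ω))
    [NullSingletonClass (μ.map Y)] :
    (∫ t, ∫ x, (((condDistrib Y X μ) x (Set.Ici t)).toReal) ^ 2 ∂(μ.map X) ∂(μ.map Y)) =
      ∫ t, ((μ.map Y) (Set.Ici t)).toReal ∂(μ.map Y) ∧
    (∫ t, ((μ.map Y) (Set.Ici t)).toReal ∂(μ.map Y)) = 1 / 2 ∧
    6 * (∫ t, ∫ x, (((condDistrib Y X μ) x (Set.Ici t)).toReal) ^ 2 ∂(μ.map X) ∂(μ.map Y)) - 2
      = 1 := by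
  have hY : Measurable Y := by rw [hYf]; exact hf.comp hX
  haveI : IsProbabilityMeasure (μ.map Y) := Measure.isProbabilityMeasure_map hY.aemeasurable
  haveI : IsProbabilityMeasure (μ.map X) := Measure.isProbabilityMeasure_map hX.aemeasurable
  -- the joint law is the compProd of the law of X with the deterministic kernel of f
  have hκ : μ.map (fun ω => (X ω, Y ω)) = μ.map X ⊗ₘ Kernel.deterministic f hf := by
    ext s hs
    rw [Measure.compProd_apply hs]
    have hfn : (fun ω => (X ω, Y ω)) = (fun x => (x, f x)) ∘ X := by
      ext ω
      · rfl
      · simp [hYf]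
    have hm : Measurable fun x : ℝ => (x, f x) := measurable_id.prodMk hf
    rw [hfn, ← Measure.map_map hm hX, Measure.map_apply hm hs,
      ← lintegral_indicator_one (hm hs)]
    refine lintegral_congr fun x => ?_
    rw [Kernel.deterministic_apply' hf x (measurable_prodMk_left hs)]
    by_cases h : (x, f x) ∈ s
    · simp [Set.indicator, h]
    · simp [Set.indicator, h]
  have h1 : ∀ᵐ x ∂(μ.map X), Kernel.deterministic f hf x = condDistrib Y X μ x :=
    (condDistrib_ae_eq_of_measure_eq_compProd_of_measurable hX hY hκ).mono fun _ hx => hx.symm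
  have key : ∀ t, (∫ x, (((condDistrib Y X μ) x (Set.Ici t)).toReal) ^ 2 ∂(μ.map X)) =
      ((μ.map Y) (Set.Ici t)).toReal := by
    intro t
    have h2 : ∀ᵐ x ∂(μ.map X),
        (((condDistrib Y X μ) x (Set.Ici t)).toReal) ^ 2 =
          Set.indicator (f ⁻¹' Set.Ici t) (fun _ => (1 : ℝ)) x := by
      filter_upwards [h1] with x hx
      rw [← hx, Kernel.deterministic_apply' hf x measurableSet_Ici]
      by_cases h : f x ∈ Set.Ici t
      · simp [Set.indicator, h]
      · simp [Set.indicator, h]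
    rw [integral_congr_ae h2]
    have : (∫ x, Set.indicator (f ⁻¹' Set.Ici t) (fun _ => (1 : ℝ)) x ∂(μ.map X)) =
        ((μ.map X) (f ⁻¹' Set.Ici t)).toReal :=
      integral_indicator_one (hf measurableSet_Ici)
    rw [this]
    congr 1
    rw [Measure.map_apply hX (hf measurableSet_Ici), Measure.map_apply hY measurableSet_Ici,
      hYf]
    rfl
  have hfirst : (∫ t, ∫ x, (((condDistrib Y X μ) x (Set.Ici t)).toReal) ^ 2
      ∂(μ.map X) ∂(μ.map Y)) = ∫ t, ((μ.map Y) (Set.Ici t)).toReal ∂(μ.map Y) :=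
    integral_congr_ae (Filter.Eventually.of_forall key)
  have hhalf := integral_Ici_eq_half (μ.map Y)
  refine ⟨hfirst, hhalf, ?_⟩
  rw [hfirst, hhalf]
  norm_num
end

section
/- For the model Y = XZ with X ~ Bernoulli(p) and Z ~ Bernoulli(p') independent (0 < p, p' < 1), Chatterjee's measure evaluates to ξ(X, Y) = (1-p)p' / (1 - pp'). -/
/-!
Given `X`, the event `{Y ≥ 1} = {X = 1} ∩ {Z = 1}` has conditional probability `p' · 1{X = 1}`
by independence, a multiple of a Bernoulli(`p`) variable with variance `p'² p (1 - p)`, while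
`{Y ≥ 0}` is sure, so the `t = 0` terms vanish. With `P(Y = 1) = p p'` the ratio is
`p p' · p'² p (1 - p) / (p p' · p p' (1 - p p'))`.
-/

open MeasureTheory ProbabilityTheory

section

variable {Ω α β γ : Type*} {mΩ : MeasurableSpace Ω} {μ : Measure Ω}

lemma variance_indicator_one [IsProbabilityMeasure μ] {A : Set Ω} (hA : MeasurableSet A) :
    variance (A.indicator 1) μ = μ.real A * (1 - μ.real A) := by
  have hsq : A.indicator (1 : Ω → ℝ) ^ 2 = A.indicator 1 := by
    rw [sq, ← Set.inter_indicator_one, Set.inter_self]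
  have hL2 : MemLp (A.indicator (1 : Ω → ℝ)) 2 μ :=
    memLp_indicator_const 2 hA 1 (Or.inr (measure_ne_top μ A))
  rw [variance_eq_sub hL2, hsq, integral_indicator_one hA]
  ring

lemma condExp_indicator_preimage_inter_of_indepFun [IsFiniteMeasure μ]
    {mα : MeasurableSpace α} {mγ : MeasurableSpace γ} {X : Ω → α} {Z : Ω → γ}
    (hX : Measurable X) (hZ : Measurable Z) (hXZ : IndepFun X Z μ)
    {u : Set α} {v : Set γ} (hu : MeasurableSet u) (hv : MeasurableSet v) :
    μ[(X ⁻¹' u ∩ Z ⁻¹' v).indicator 1 | mα.comap X] =ᵐ[μ]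
      fun ω => (X ⁻¹' u).indicator 1 ω * μ.real (Z ⁻¹' v) := by
  have hXu : StronglyMeasurable[mα.comap X] ((X ⁻¹' u).indicator (1 : Ω → ℝ)) :=
    stronglyMeasurable_const.indicator ⟨u, hu, rfl⟩
  have hZv : StronglyMeasurable[mγ.comap Z] ((Z ⁻¹' v).indicator (1 : Ω → ℝ)) :=
    stronglyMeasurable_const.indicator ⟨v, hv, rfl⟩
  have hint : ∀ {s : Set Ω}, MeasurableSet s → Integrable (s.indicator (1 : Ω → ℝ)) μ :=
    fun hs => (integrable_const 1).indicator hs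
  rw [Set.inter_indicator_one]
  filter_upwards [condExp_mul_of_stronglyMeasurable_left hXu
      (by rw [← Set.inter_indicator_one]; exact hint ((hX hu).inter (hZ hv))) (hint (hZ hv)),
    condExp_indep_eq hZ.comap_le hX.comap_le hZv hXZ.symm] with ω hpull hindep
  rw [hpull, Pi.mul_apply, hindep, integral_indicator_one (hZ hv)]

lemma condDistrib_real_ae_eq_of_preimage_eq_inter [IsFiniteMeasure μ]
    {mα : MeasurableSpace α} {mβ : MeasurableSpace β} [StandardBorelSpace β] [Nonempty β]
    {mγ : MeasurableSpace γ} {X : Ω → α} {Y : Ω → β} {Z : Ω → γ}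
    (hX : Measurable X) (hY : Measurable Y) (hZ : Measurable Z) (hXZ : IndepFun X Z μ)
    {s : Set β} {u : Set α} {v : Set γ} (hs : MeasurableSet s) (hu : MeasurableSet u)
    (hv : MeasurableSet v) (hYs : Y ⁻¹' s = X ⁻¹' u ∩ Z ⁻¹' v) :
    (fun ω => (condDistrib Y X μ (X ω)).real s) =ᵐ[μ]
      fun ω => (X ⁻¹' u).indicator 1 ω * μ.real (Z ⁻¹' v) := by
  exact (hYs ▸ condDistrib_ae_eq_condExp hX hY hs).trans
    (condExp_indicator_preimage_inter_of_indepFun hX hZ hXZ hu hv)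

end

/-- For `Y = X·Z` with `X ~ Bernoulli(p)` and `Z ~ Bernoulli(p')` independent
(`0 < p, p' < 1`), Chatterjee's measure
`ξ(X,Y) = Σ_t P(Y=t)·Var(P(Y ≥ t | X)) / Σ_t P(Y=t)·P(Y ≥ t)(1 - P(Y ≥ t))`
(with `t` ranging over the two values `{0,1}` of `Y`) evaluates to
`(1-p)p'/(1-pp')`. -/
theorem xi_bernoulli_product
    {Ω : Type*} [MeasurableSpace Ω] (μ : Measure Ω) [IsProbabilityMeasure μ]
    (X Z : Ω → ℝ) (hX : Measurable X) (hZ : Measurable Z)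
    (hindep : IndepFun X Z μ)
    (hXval : ∀ ω, X ω = 0 ∨ X ω = 1) (hZval : ∀ ω, Z ω = 0 ∨ Z ω = 1)
    (p p' : ℝ) (hp : 0 < p) (hp1 : p < 1) (hp' : 0 < p') (hp'1 : p' < 1)
    (hXp : μ {ω | X ω = 1} = ENNReal.ofReal p)
    (hZp : μ {ω | Z ω = 1} = ENNReal.ofReal p')
    (Y : Ω → ℝ) (hY : Y = fun ω => X ω * Z ω) :
    (∑ t ∈ ({0, 1} : Finset ℝ),
        (μ {ω | Y ω = t}).toReal *
          variance (fun ω => ((condDistrib Y X μ) (X ω) (Set.Ici t)).toReal) μ) /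
      (∑ t ∈ ({0, 1} : Finset ℝ),
        (μ {ω | Y ω = t}).toReal *
          ((μ {ω | t ≤ Y ω}).toReal * (1 - (μ {ω | t ≤ Y ω}).toReal))) =
    (1 - p) * p' / (1 - p * p') := by
  have hYm : Measurable Y := hY ▸ hX.mul hZ
  have hXp' : μ.real (X ⁻¹' {1}) = p := by
    rw [measureReal_def, show μ (X ⁻¹' {1}) = _ from hXp, ENNReal.toReal_ofReal hp.le]
  have hZp' : μ.real (Z ⁻¹' {1}) = p' := by
    rw [measureReal_def, show μ (Z ⁻¹' {1}) = _ from hZp, ENNReal.toReal_ofReal hp'.le]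
  obtain ⟨hY0, hY1, hY1'⟩ : {ω | 0 ≤ Y ω} = Set.univ ∧
      {ω | 1 ≤ Y ω} = X ⁻¹' {1} ∩ Z ⁻¹' {1} ∧ {ω | Y ω = 1} = X ⁻¹' {1} ∩ Z ⁻¹' {1} := by
    refine ⟨?_, ?_, ?_⟩ <;> ext ω <;>
      rcases hXval ω with h | h <;> rcases hZval ω with h' | h' <;> simp [hY, h, h']
  have hPY1 : μ.real (X ⁻¹' {1} ∩ Z ⁻¹' {1}) = p * p' := by
    rw [measureReal_def, hindep.measure_inter_preimage_eq_mul _ _ (measurableSet_singleton 1)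
      (measurableSet_singleton 1), ENNReal.toReal_mul, ← measureReal_def, ← measureReal_def,
      hXp', hZp']
  have hvar0 : variance (fun ω => (condDistrib Y X μ (X ω)).real (Set.Ici 0)) μ = 0 := by
    rw [variance_congr (condDistrib_real_ae_eq_of_preimage_eq_inter hX hYm hZ hindep
      measurableSet_Ici MeasurableSet.univ MeasurableSet.univ (hY0.trans (by simp))),
      variance_mul_const, Set.preimage_univ, variance_indicator_one MeasurableSet.univ]
    simp
  have hvar1 : variance (fun ω => (condDistrib Y X μ (X ω)).real (Set.Ici 1)) μ =
      p * (1 - p) * p' ^ 2 := by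
    rw [variance_congr (condDistrib_real_ae_eq_of_preimage_eq_inter hX hYm hZ hindep
      measurableSet_Ici (measurableSet_singleton 1) (measurableSet_singleton 1) hY1),
      variance_mul_const, variance_indicator_one (hX (measurableSet_singleton 1)), hXp', hZp']
  have hpp' : 1 - p * p' ≠ 0 := by nlinarith
  rw [Finset.sum_pair zero_ne_one, Finset.sum_pair zero_ne_one]
  simp only [← measureReal_def]
  rw [hvar0, hvar1, hY0, hY1, hY1', hPY1, probReal_univ]
  field_simp [hp.ne', hp'.ne', hpp']
  ring
end
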